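/- Let G be a connected graph in which every minimum vertex cover induces a connected subgraph. Then evc(G) equals the minimum k such that for every vertex v of G there exists a vertex cover of G of size k containing v. -/

import Mathlib

namespace EVC

open SimpleGraph

variable {V : Type*}

/-- `S` is a vertex cover of `G`. -/
def IsVC (G : SimpleGraph V) (S : Set V) : Prop :=
  ∀ ⦃u v : V⦄, G.Adj u v → u ∈ S ∨ v ∈ S

/-- The minimum vertex cover number of `G`. -/
noncomputable def mvc (G : SimpleGraph V) : ℕ :=
  sInf {k | ∃ S : Set V, IsVC G S ∧ S.ncard = k}

/-- The minimum size of a vertex cover of `G` containing all vertices of `U`. -/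
noncomputable def mvcOn (G : SimpleGraph V) (U : Set V) : ℕ :=
  sInf {k | ∃ S : Set V, IsVC G S ∧ U ⊆ S ∧ S.ncard = k}

/-- Configuration `S'` is obtained from configuration `S` by a legal move of the guards
defending an attack on the edge `uv`: each guard stays or moves to an adjacent vertex
(at most one guard per vertex), and some guard moves across the attacked edge `uv`. -/
def Defends (G : SimpleGraph V) (S S' : Set V) (u v : V) : Prop :=
  ∃ f : V → V, Set.BijOn f S S' ∧ (∀ w ∈ S, f w = w ∨ G.Adj w (f w)) ∧
    ((u ∈ S ∧ f u = v) ∨ (v ∈ S ∧ f v = u))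

/-- `C` is an eternal vertex cover class of `G` with `k` guards, each configuration being a
vertex cover of size `k` containing `U`: from each configuration, every attack on an edge
can be defended by a legal move to another configuration in `C`. -/
def IsEvcClassOn (G : SimpleGraph V) (U : Set V) (k : ℕ) (C : Set (Set V)) : Prop :=
  C.Nonempty ∧ (∀ S ∈ C, IsVC G S ∧ U ⊆ S ∧ S.ncard = k) ∧
    ∀ S ∈ C, ∀ u v : V, G.Adj u v → ∃ S' ∈ C, Defends G S S' u v

/-- An eternal vertex cover class with no constraint on occupied vertices. -/
def IsEvcClass (G : SimpleGraph V) (k : ℕ) (C : Set (Set V)) : Prop :=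
  IsEvcClassOn G ∅ k C

/-- `evc_U(G)` : the minimum `k` admitting an eternal vertex cover class all of whose
configurations contain `U`. -/
noncomputable def evcOn (G : SimpleGraph V) (U : Set V) : ℕ :=
  sInf {k | ∃ C : Set (Set V), IsEvcClassOn G U k C}

/-- The eternal vertex cover number of `G`. -/
noncomputable def evc (G : SimpleGraph V) : ℕ := evcOn G ∅

/-- `x` is a cut vertex of the connected graph `G`. -/
def IsCutVertex (G : SimpleGraph V) (x : V) : Prop :=
  G.Connected ∧ ¬ (G.induce {v : V | v ≠ x}).Connected

/-- The set of cut vertices of `G`. -/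
def cutVertices (G : SimpleGraph V) : Set V := {x | IsCutVertex G x}

/-- `G` is locally connected: every open neighborhood induces a connected subgraph. -/
def LocallyConnected (G : SimpleGraph V) : Prop :=
  ∀ v : V, (G.induce (G.neighborSet v)).Connected

end EVC

/-!
Write `r` for the right-hand side. An eternal class with `k` guards has, for every vertex `x`, a
configuration containing `x` (defend an attack on an edge at `x`), so `r ≤ evc G`; and
`mvc G ≤ r ≤ mvc G + 1`. Conversely, if `r = mvc G` the minimum vertex covers form an eternal
class, and otherwise the covers `T ∪ {w}` with `T` minimum do. An attack from `a ∈ S` to `b ∉ S`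
is answered by moving the guards onto a suitable cover `T ∋ b`, the guard on `a` going to `b`;
such a move exists by Hall's theorem. Hall's condition for `A ⊆ S \ {a}` comes from the vertex
cover `(S \ A) ∪ (N[A] ∩ T)`, which has at least `mvc G` vertices: `A` can only be deficient if
no vertex of `(S \ A) ∩ T` is adjacent to `A`, and the connectivity of `S` (resp. `T ∪ {w}`)
rules this out, for minimum covers once `T` is chosen with `|S \ T|` minimal.
-/

namespace EVC

open SimpleGraph

variable {V : Type*} {G : SimpleGraph V}

def closedNbhd (G : SimpleGraph V) (A : Set V) : Set V :=
  {y | ∃ a ∈ A, y = a ∨ G.Adj a y}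

lemma subset_closedNbhd (A : Set V) : A ⊆ closedNbhd G A :=
  fun a ha => ⟨a, ha, Or.inl rfl⟩

lemma isVC_univ : IsVC G Set.univ :=
  fun _ _ _ => Or.inl trivial

lemma IsVC.insert {S : Set V} (hS : IsVC G S) (x : V) : IsVC G (insert x S) :=
  fun _ _ h => (hS h).imp (Set.mem_insert_of_mem x) (Set.mem_insert_of_mem x)

lemma mvc_le_ncard {S : Set V} (hS : IsVC G S) : mvc G ≤ S.ncard :=
  Nat.sInf_le ⟨S, hS, rfl⟩

lemma exists_isVC_ncard_eq_mvc (G : SimpleGraph V) : ∃ S, IsVC G S ∧ S.ncard = mvc G :=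
  Nat.sInf_mem (s := {k | ∃ S : Set V, IsVC G S ∧ S.ncard = k}) ⟨_, Set.univ, isVC_univ, rfl⟩

lemma exists_notMem_of_ncard_eq_mvc [Finite V] [Nonempty V] {T : Set V}
    (hT : T.ncard = mvc G) : ∃ z, z ∉ T := by
  by_contra! hT_univ
  obtain ⟨a⟩ := ‹Nonempty V›
  have hvc : IsVC G (T \ {a}) := fun x y hxy => by
    by_cases hx : x = a
    · exact Or.inr ⟨hT_univ y, fun hy => hxy.ne (hx.trans hy.symm)⟩
    · exact Or.inl ⟨hT_univ x, hx⟩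
  have hle := mvc_le_ncard hvc
  rw [Set.ncard_sdiff_singleton_of_mem (hT_univ a)] at hle
  have hpos : 0 < T.ncard := (Set.ncard_pos (Set.toFinite _)).mpr ⟨a, hT_univ a⟩
  omega

lemma exists_adj_of_connected_min_covers
    (hcc : ∀ S : Set V, IsVC G S → S.ncard = mvc G → (G.induce S).Connected) :
    ∃ a b, G.Adj a b := by
  by_contra! h
  have hvc : IsVC G ∅ := fun a b hab => (h a b hab).elim
  have hmvc : (∅ : Set V).ncard = mvc G := by
    have := mvc_le_ncard hvc
    rw [Set.ncard_empty] at this ⊢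
    omega
  obtain ⟨⟨x, hx⟩⟩ := (hcc ∅ hvc hmvc).nonempty
  exact hx

lemma exists_adj_of_connected_induce {S A : Set V} (hS : (G.induce S).Connected) (hAS : A ⊆ S)
    (hA : A.Nonempty) (hSA : (S \ A).Nonempty) : ∃ a ∈ A, ∃ b ∈ S \ A, G.Adj a b := by
  obtain ⟨a, ha⟩ := hA
  obtain ⟨b, hbS, hbA⟩ := hSA
  obtain ⟨p⟩ := hS.preconnected ⟨a, hAS ha⟩ ⟨b, hbS⟩
  obtain ⟨d, -, hd₁, hd₂⟩ := p.exists_boundary_dart {x : S | (x : V) ∈ A} ha hbA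
  exact ⟨d.fst, hd₁, d.snd, ⟨d.snd.2, hd₂⟩, d.adj⟩

lemma isVC_sdiff_union_closedNbhd_inter {S T : Set V} (hS : IsVC G S) (hT : IsVC G T)
    (A : Set V) : IsVC G ((S \ A) ∪ (closedNbhd G A ∩ T)) := by
  have hA : ∀ {x y}, G.Adj x y → x ∈ A → x ∈ closedNbhd G A ∩ T ∨ y ∈ closedNbhd G A ∩ T :=
    fun hxy hx =>
      (hT hxy).imp (fun h => ⟨subset_closedNbhd A hx, h⟩) (fun h => ⟨⟨_, hx, Or.inr hxy⟩, h⟩)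
  intro x y hxy
  rcases hS hxy with hx | hy
  · by_cases hxA : x ∈ A
    · exact (hA hxy hxA).imp Or.inr Or.inr
    · exact Or.inl (Or.inl ⟨hx, hxA⟩)
  · by_cases hyA : y ∈ A
    · exact (hA hxy.symm hyA).symm.imp Or.inr Or.inr
    · exact Or.inr (Or.inl ⟨hy, hyA⟩)

lemma mvc_add_ncard_inter_le [Finite V] {S T : Set V} (hS : IsVC G S) (hT : IsVC G T)
    (A : Set V) :
    mvc G + ((S \ A) ∩ (closedNbhd G A ∩ T)).ncard ≤
      (S \ A).ncard + (closedNbhd G A ∩ T).ncard := by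
  rw [← Set.ncard_union_add_ncard_inter]
  exact Nat.add_le_add_right (mvc_le_ncard (isVC_sdiff_union_closedNbhd_inter hS hT A)) _

lemma exists_bijOn_of_hall {α : Type*} [Finite α] {S T : Set α} (R : α → α → Prop)
    (hcard : T.ncard ≤ S.ncard)
    (hall : ∀ A ⊆ S, A.ncard ≤ ({y | ∃ a ∈ A, R a y} ∩ T).ncard) :
    ∃ f : α → α, Set.BijOn f S T ∧ ∀ x ∈ S, R x (f x) := by
  classical
  have := Fintype.ofFinite α
  obtain ⟨g, hg_inj, hg⟩ := (Fintype.all_card_le_filter_rel_iff_exists_injective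
    (fun (x : S) y => R x y ∧ y ∈ T)).mp fun A => by
      convert hall (Subtype.val '' (A : Set S)) (by simp) using 1
      · rw [Set.ncard_image_of_injective _ Subtype.val_injective, Set.ncard_coe_finset]
      · rw [← Set.ncard_coe_finset]
        congr 1
        ext y
        aesop
  let f : α → α := fun x => if h : x ∈ S then g ⟨x, h⟩ else x
  have hf : ∀ x (h : x ∈ S), f x = g ⟨x, h⟩ := fun x h => dif_pos h
  have hinj : Set.InjOn f S := fun x hx y hy hxy => by
    rw [hf x hx, hf y hy] at hxy
    exact congrArg Subtype.val (hg_inj hxy)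
  have himage : f '' S = T := by
    refine Set.eq_of_subset_of_ncard_le ?_ (by rwa [hinj.ncard_image]) (Set.toFinite T)
    rintro _ ⟨x, hx, rfl⟩
    exact hf x hx ▸ (hg _).2
  refine ⟨f, himage ▸ hinj.bijOn_image, fun x hx => ?_⟩
  rw [hf x hx]
  exact (hg ⟨x, hx⟩).1

lemma Defends.symm {S S' : Set V} {u v : V} (h : Defends G S S' u v) : Defends G S S' v u :=
  let ⟨f, hbij, hstep, hcross⟩ := h
  ⟨f, hbij, hstep, hcross.symm⟩

lemma defends_self_of_mem {S : Set V} {u v : V} (hu : u ∈ S) (hv : v ∈ S) (huv : G.Adj u v) :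
    Defends G S S u v := by
  classical
  refine ⟨Equiv.swap u v, Equiv.swap_bijOn_self (iff_of_true hu hv), fun w _ => ?_,
    Or.inl ⟨hu, Equiv.swap_apply_left u v⟩⟩
  rcases eq_or_ne w u with rfl | hwu
  · exact Or.inr (by rwa [Equiv.swap_apply_left])
  rcases eq_or_ne w v with rfl | hwv
  · exact Or.inr (by rwa [Equiv.swap_apply_right, adj_comm])
  · exact Or.inl (Equiv.swap_apply_of_ne_of_ne hwu hwv)

/-- Hall's condition for moving the guards on `S` onto `T` in one step, the guard on `v` going to
`u`. -/
def HallCondition (G : SimpleGraph V) (S T : Set V) (v u : V) : Prop :=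
  ∀ A ⊆ S \ {v}, A.ncard ≤ (closedNbhd G A ∩ (T \ {u})).ncard

lemma defends_of_hallCondition [Finite V] {S T : Set V} {v u : V} (hv : v ∈ S) (hu : u ∈ T)
    (hvu : G.Adj v u) (hcard : T.ncard ≤ S.ncard) (hall : HallCondition G S T v u) :
    Defends G S T v u := by
  classical
  obtain ⟨f, hbij, hstep⟩ := exists_bijOn_of_hall (fun x y => y = x ∨ G.Adj x y)
    (by rw [Set.ncard_sdiff_singleton_of_mem hu, Set.ncard_sdiff_singleton_of_mem hv]; omega) hall
  have hbij' : Set.BijOn (Function.update f v u) (S \ {v}) (T \ {u}) :=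
    hbij.congr fun x hx => (Function.update_of_ne hx.2 _ _).symm
  refine ⟨Function.update f v u, ?_, fun w hw => ?_, Or.inl ⟨hv, by simp⟩⟩
  · simpa [Set.insert_eq_of_mem hv, Set.insert_eq_of_mem hu] using hbij'.insert (a := v) (by simp)
  · rcases eq_or_ne w v with rfl | hwv
    · simp [hvu]
    · rw [Function.update_of_ne hwv]
      exact hstep w ⟨hw, hwv⟩

lemma hallCondition_of_minimal [Finite V] {S T : Set V} {v u : V}
    (hS : IsVC G S) (hSm : S.ncard = mvc G) (hSconn : (G.induce S).Connected) (hv : v ∈ S)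
    (hT : IsVC G T)
    (hmin : ∀ T', IsVC G T' → T'.ncard = mvc G → u ∈ T' → (S \ T).ncard ≤ (S \ T').ncard) :
    HallCondition G S T v u := by
  intro A hA
  have hAS : A ⊆ S := hA.trans Set.sdiff_subset
  have hkey := mvc_add_ncard_inter_le hS hT A
  have hSA := Set.ncard_sdiff hAS
  have hAle := Set.ncard_le_ncard hAS
  have hZ := isVC_sdiff_union_closedNbhd_inter hS hT A
  rw [← Set.inter_sdiff_assoc]
  set B := closedNbhd G A ∩ T
  by_contra! hlt
  have huB : u ∈ B := by
    by_contra huB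
    rw [Set.sdiff_singleton_eq_self huB] at hlt
    omega
  have hBu := Set.ncard_sdiff_singleton_add_one huB
  -- a deficient `A` makes `(S \ A) ∪ B` a minimum cover containing `u`, with disjoint parts
  have hov : ((S \ A) ∩ B).ncard = 0 := by omega
  have hZm : ((S \ A) ∪ B).ncard = mvc G := by
    have := Set.ncard_union_add_ncard_inter (S \ A) B
    omega
  have hZS : S \ ((S \ A) ∪ B) ⊆ S \ T := fun x ⟨hxS, hxZ⟩ => by
    have hxA : x ∈ A := by_contra fun hxA => hxZ (Or.inl ⟨hxS, hxA⟩)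
    exact ⟨hxS, fun hxT => hxZ (Or.inr ⟨subset_closedNbhd A hxA, hxT⟩)⟩
  have hSAT : S \ A ⊆ T := fun x hx => by
    by_contra hxT
    have hxZ : x ∈ S \ ((S \ A) ∪ B) :=
      Set.eq_of_subset_of_ncard_le hZS (hmin _ hZ hZm (Or.inr huB)) ▸ ⟨hx.1, hxT⟩
    exact hxZ.2 (Or.inl hx)
  obtain ⟨a, haA, b, hb, hab⟩ := exists_adj_of_connected_induce hSconn hAS
    ((Set.ncard_pos (Set.toFinite _)).mp (by omega)) ⟨v, hv, fun hvA => (hA hvA).2 rfl⟩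
  have hov_pos : 0 < ((S \ A) ∩ B).ncard :=
    (Set.ncard_pos (Set.toFinite _)).mpr ⟨b, hb, ⟨a, haA, Or.inr hab⟩, hSAT hb⟩
  omega

lemma hallCondition_insert [Finite V] {T : Set V} {w a b : V}
    (hT : IsVC G T) (hTm : T.ncard = mvc G) (hTconn : (G.induce T).Connected) (hwT : w ∉ T)
    (hw : ∃ y, G.Adj w y) (ha : a ∈ insert w T) (hbT : b ∉ T) :
    HallCondition G (insert w T) (insert b T) a b := by
  intro A hA
  have hAS : A ⊆ insert w T := hA.trans Set.sdiff_subset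
  rw [Set.insert_sdiff_self_of_notMem hbT]
  by_cases hwA : w ∈ A
  · obtain ⟨y, hwy⟩ := hw
    have hconn : (G.induce (insert w T)).Connected := by
      rw [← Set.union_singleton]
      exact connected_induce_union hTconn.preconnected Preconnected.of_subsingleton
        ((hT hwy).resolve_left hwT) rfl hwy.symm
    obtain ⟨x, hxA, c, hc, hxc⟩ := exists_adj_of_connected_induce hconn hAS ⟨w, hwA⟩
      ⟨a, ha, fun haA => (hA haA).2 rfl⟩
    have hcT : c ∈ T := hc.1.resolve_left fun hcw => hc.2 (hcw ▸ hwA)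
    have hov : 0 < ((insert w T \ A) ∩ (closedNbhd G A ∩ T)).ncard :=
      (Set.ncard_pos (Set.toFinite _)).mpr ⟨c, hc, ⟨x, hxA, Or.inr hxc⟩, hcT⟩
    have hkey := mvc_add_ncard_inter_le (hT.insert w) hT A
    have hSA := Set.ncard_sdiff hAS
    have hAle := Set.ncard_le_ncard hAS
    rw [Set.ncard_insert_of_notMem hwT] at hSA hAle
    omega
  · exact Set.ncard_le_ncard fun x hx =>
      ⟨subset_closedNbhd A hx, (hAS hx).resolve_left fun hxw => hwA (hxw ▸ hx)⟩

lemma isEvcClass_of_forall_defends {k : ℕ} {C : Set (Set V)} (hne : C.Nonempty)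
    (hC : ∀ S ∈ C, IsVC G S ∧ S.ncard = k)
    (hdef : ∀ S ∈ C, ∀ u v, G.Adj u v → u ∈ S → v ∉ S → ∃ S' ∈ C, Defends G S S' u v) :
    IsEvcClass G k C := by
  refine ⟨hne, fun S hS => ⟨(hC S hS).1, Set.empty_subset S, (hC S hS).2⟩,
    fun S hS u v huv => ?_⟩
  by_cases hu : u ∈ S <;> by_cases hv : v ∈ S
  · exact ⟨S, hS, defends_self_of_mem hu hv huv⟩
  · exact hdef S hS u v huv hu hv
  · obtain ⟨S', hS', h⟩ := hdef S hS v u huv.symm hv hu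
    exact ⟨S', hS', h.symm⟩
  · exact (((hC S hS).1 huv).elim hu hv).elim

lemma isEvcClass_minCovers [Finite V]
    (hcc : ∀ S : Set V, IsVC G S → S.ncard = mvc G → (G.induce S).Connected)
    (hmem : ∀ x, ∃ S : Set V, IsVC G S ∧ S.ncard = mvc G ∧ x ∈ S) :
    IsEvcClass G (mvc G) {S | IsVC G S ∧ S.ncard = mvc G} := by
  refine isEvcClass_of_forall_defends (exists_isVC_ncard_eq_mvc G) (fun S hS => hS)
    fun S ⟨hS, hSm⟩ a b hab ha _ => ?_
  obtain ⟨T, ⟨hT, hTm, hbT⟩, hmin⟩ := Set.exists_min_image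
    {T | IsVC G T ∧ T.ncard = mvc G ∧ b ∈ T} (fun T => (S \ T).ncard) (Set.toFinite _) (hmem b)
  exact ⟨T, ⟨hT, hTm⟩, defends_of_hallCondition ha hbT hab (by rw [hSm, hTm])
    (hallCondition_of_minimal hS hSm (hcc S hS hSm) ha hT
      fun T' h₁ h₂ h₃ => hmin T' ⟨h₁, h₂, h₃⟩)⟩

lemma isEvcClass_insertMinCovers [Finite V]
    (hcc : ∀ S : Set V, IsVC G S → S.ncard = mvc G → (G.induce S).Connected)
    (hnbr : ∀ x, ∃ y, G.Adj x y) (hne : ∃ T w, IsVC G T ∧ T.ncard = mvc G ∧ w ∉ T) :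
    IsEvcClass G (mvc G + 1)
      {S | ∃ T w, IsVC G T ∧ T.ncard = mvc G ∧ w ∉ T ∧ S = insert w T} := by
  refine isEvcClass_of_forall_defends ?_ ?_ ?_
  · obtain ⟨T, w, hT, hTm, hwT⟩ := hne
    exact ⟨_, T, w, hT, hTm, hwT, rfl⟩
  · rintro _ ⟨T, w, hT, hTm, hwT, rfl⟩
    exact ⟨hT.insert w, by rw [Set.ncard_insert_of_notMem hwT, hTm]⟩
  · rintro _ ⟨T, w, hT, hTm, hwT, rfl⟩ a b hab ha hb
    have hbT : b ∉ T := fun h => hb (Set.mem_insert_of_mem w h)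
    refine ⟨insert b T, ⟨T, b, hT, hTm, hbT, rfl⟩, defends_of_hallCondition ha
      (Set.mem_insert b T) hab (by rw [Set.ncard_insert_of_notMem hwT,
        Set.ncard_insert_of_notMem hbT]) ?_⟩
    exact hallCondition_insert hT hTm (hcc T hT hTm) hwT (hnbr w) ha hbT

lemma IsEvcClass.exists_mem_cover {k : ℕ} {C : Set (Set V)} (hC : IsEvcClass G k C)
    (hnbr : ∀ x, ∃ y, G.Adj x y) (x : V) : ∃ S : Set V, IsVC G S ∧ S.ncard = k ∧ x ∈ S := by
  obtain ⟨⟨S₀, hS₀⟩, hcovers, hdef⟩ := hC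
  by_cases hx : x ∈ S₀
  · exact ⟨S₀, (hcovers S₀ hS₀).1, (hcovers S₀ hS₀).2.2, hx⟩
  obtain ⟨y, hxy⟩ := hnbr x
  obtain ⟨S', hS', f, hbij, -, hcross⟩ := hdef S₀ hS₀ x y hxy
  obtain ⟨hy, rfl⟩ := hcross.resolve_left fun h => hx h.1
  exact ⟨S', (hcovers S' hS').1, (hcovers S' hS').2.2, hbij.mapsTo hy⟩

lemma exists_isEvcClass_sInf [Finite V] [Nonempty V]
    (hcc : ∀ S : Set V, IsVC G S → S.ncard = mvc G → (G.induce S).Connected)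
    (hnbr : ∀ x, ∃ y, G.Adj x y) :
    ∃ C, IsEvcClass G (sInf {k | ∀ v : V, ∃ S : Set V, IsVC G S ∧ S.ncard = k ∧ v ∈ S}) C := by
  set R := {k | ∀ v : V, ∃ S : Set V, IsVC G S ∧ S.ncard = k ∧ v ∈ S}
  obtain ⟨T, hT, hTm⟩ := exists_isVC_ncard_eq_mvc G
  obtain ⟨z, hz⟩ := exists_notMem_of_ncard_eq_mvc hTm
  have hplus : mvc G + 1 ∈ R := fun x => by
    by_cases hx : x ∈ T
    · exact ⟨insert z T, hT.insert z, by rw [Set.ncard_insert_of_notMem hz, hTm],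
        Set.mem_insert_of_mem z hx⟩
    · exact ⟨insert x T, hT.insert x, by rw [Set.ncard_insert_of_notMem hx, hTm],
        Set.mem_insert x T⟩
  have hR : sInf R ∈ R := Nat.sInf_mem ⟨_, hplus⟩
  obtain ⟨S, hS, hSR, -⟩ := hR z
  rcases (hSR ▸ mvc_le_ncard hS).eq_or_lt with h | h
  · exact ⟨_, h ▸ isEvcClass_minCovers hcc (h ▸ hR)⟩
  · rw [le_antisymm (Nat.sInf_le hplus) h]
    exact ⟨_, isEvcClass_insertMinCovers hcc hnbr ⟨T, z, hT, hTm, hz⟩⟩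

end EVC

open EVC SimpleGraph

/-- If `G` is connected and every minimum vertex cover induces a connected
subgraph, then `evc G` is the least `k` such that every vertex lies in some vertex cover
of size `k`. -/
theorem evc_eq_sInf_of_connected_min_covers {V : Type*} [Finite V]
    (G : SimpleGraph V) (hconn : G.Connected)
    (hcc : ∀ S : Set V, IsVC G S → S.ncard = mvc G → (G.induce S).Connected) :
    evc G = sInf {k | ∀ v : V, ∃ S : Set V, IsVC G S ∧ S.ncard = k ∧ v ∈ S} := by
  obtain ⟨_, _, hab⟩ := exists_adj_of_connected_min_covers hcc
  have := hab.nontrivial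
  have hnbr : ∀ x, ∃ y, G.Adj x y := hconn.preconnected.exists_adj_of_nontrivial
  obtain ⟨C, hC⟩ := exists_isEvcClass_sInf hcc hnbr
  exact le_antisymm (Nat.sInf_le ⟨C, hC⟩) (csInf_le_csInf (OrderBot.bddBelow _) ⟨_, C, hC⟩
    fun _ ⟨_, hC'⟩ => IsEvcClass.exists_mem_cover hC' hnbr)
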